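/- arXiv:1201.3884 — 6 statements merged into one kernel-verified Lean document; each statement's English description precedes it below -/
import Mathlib

section
/- For every n ≥ 2, the number of isomorphism classes of binary rooted phylogenetic trees with leaves bijectively labeled by {1,...,n} equals the double factorial (2n-3)!! = (2n-3)(2n-5)···3·1. -/
/-- Binary rooted trees with ℕ-labeled leaves. -/
inductive PTree : Type
  | leaf : ℕ → PTree
  | node : PTree → PTree → PTree

namespace PTree

/-- The set of leaf labels of a tree. -/
def leafSet : PTree → Finset ℕ
  | leaf x => {x}
  | node l r => leafSet l ∪ leafSet r

/-- A tree is a phylogenetic tree if at every internal node the leaf label sets of the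
two subtrees are disjoint (so leaves are bijectively labeled). -/
def isPhylo : PTree → Prop
  | leaf _ => True
  | node l r => isPhylo l ∧ isPhylo r ∧ Disjoint (leafSet l) (leafSet r)

/-- Canonical ordered representative of an isomorphism class of (unordered)
phylogenetic trees: at each internal node, the subtree containing the smallest
label comes first. -/
def canonical : PTree → Prop
  | leaf _ => True
  | node l r => canonical l ∧ canonical r ∧ (leafSet l).min < (leafSet r).min

/-- `t` represents an isomorphism class of phylogenetic trees on the taxon set `S`. -/
def isTreeOn (S : Finset ℕ) (t : PTree) : Prop :=
  isPhylo t ∧ canonical t ∧ leafSet t = S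

/-- The number of leaves of a tree. -/
def numLeaves : PTree → ℕ
  | leaf _ => 1
  | node l r => numLeaves l + numLeaves r

/-- The Colless index: sum over internal nodes of |κ(left child) − κ(right child)|. -/
def colless : PTree → ℕ
  | leaf _ => 0
  | node l r => colless l + colless r + ((numLeaves l : ℤ) - (numLeaves r : ℤ)).natAbs

/-- Product over internal nodes `v` of `1/(κ(v) − 1)`. -/
def yuleProd : PTree → ℚ
  | leaf _ => 1
  | node l r => (1 / ((numLeaves l + numLeaves r : ℕ) - 1 : ℚ)) * yuleProd l * yuleProd r

/-- The probability of a phylogenetic tree with `n` leaves under the Yule model: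
`2^(n-1)/n! · ∏_{v internal} 1/(κ(v)−1)`. -/
def yule (t : PTree) : ℚ :=
  2 ^ (numLeaves t - 1) / (Nat.factorial (numLeaves t) : ℚ) * yuleProd t

/-- The depth of the leaf labeled `x` in the tree (number of arcs from the root). -/
def depthOf (x : ℕ) : PTree → ℕ
  | leaf _ => 0
  | node l r => if x ∈ leafSet l then depthOf x l + 1 else depthOf x r + 1

/-- The Sackin index: sum of the depths of the leaves. -/
def sackin (t : PTree) : ℕ := ∑ x ∈ leafSet t, depthOf x t

/-- Sum over internal nodes `v` of the number of descendant leaves `κ(v)`. -/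
def kappaSum : PTree → ℕ
  | leaf _ => 0
  | node l r => kappaSum l + kappaSum r + (numLeaves l + numLeaves r)

/-- The number of (isomorphism classes of) phylogenetic trees on `{1,…,n}`
in which leaf `1` has depth `k`. -/
noncomputable def ckn (n k : ℕ) : ℕ :=
  Nat.card {t : PTree // isTreeOn (Finset.Icc 1 n) t ∧ depthOf 1 t = k}

end PTree

/-!
Deleting the largest label `m` of a tree on `S` leaves a tree on `S \ {m}`. Conversely, a tree
with `k` leaves has `2k - 2` edges plus a root edge, onto each of which `m` can be grafted; since
`m` is the largest label, grafting it as a right child keeps the canonical child order, so the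
`2k - 1` graftings are exactly the canonical trees on `S` that delete to the given one.
Hence the count `T(k)` satisfies `T(1) = 1`, `T(k + 1) = (2k - 1) T(k)`.
-/

namespace Finset

variable {α : Type*} [LinearOrder α] {s : Finset α} {a : α}

theorem min_lt_coe_of_forall_lt (hs : s.Nonempty) (h : ∀ x ∈ s, x < a) : s.min < a := by
  obtain ⟨x, hx⟩ := hs
  exact (min_le hx).trans_lt (WithTop.coe_lt_coe.2 (h x hx))

theorem min_insert_of_forall_lt (hs : s.Nonempty) (h : ∀ x ∈ s, x < a) :
    (insert a s).min = s.min := by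
  rw [min_insert]
  exact min_eq_right (min_lt_coe_of_forall_lt hs h).le

end Finset

namespace PTree

abbrev TreesOn (S : Finset ℕ) : Type := {t : PTree // isTreeOn S t}

theorem leafSet_nonempty (t : PTree) : (leafSet t).Nonempty := by
  induction t with
  | leaf x => exact Finset.singleton_nonempty x
  | node l r ihl _ => exact ihl.mono Finset.subset_union_left

theorem numLeaves_eq_card {t : PTree} (h : isPhylo t) : numLeaves t = (leafSet t).card := by
  induction t with
  | leaf x => rfl
  | node l r ihl ihr =>
    obtain ⟨hl, hr, hd⟩ := h
    rw [numLeaves, leafSet, Finset.card_union_of_disjoint hd, ihl hl, ihr hr]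

theorem numLeaves_pos (t : PTree) : 0 < numLeaves t := by
  induction t with
  | leaf x => exact Nat.one_pos
  | node l r ihl _ => exact Nat.add_pos_left ihl _

/-- The trees obtained from `t` by grafting a new leaf `m`, as a right child, onto one of its
edges or onto a new edge above the root. -/
def insertions (m : ℕ) : PTree → List PTree
  | leaf x => [node (leaf x) (leaf m)]
  | node l r => node (node l r) (leaf m) ::
      ((insertions m l).map (node · r) ++ (insertions m r).map (node l ·))

open Classical in
/-- Inverse of grafting: only right children are tested, since `insertions` always hangs the new
leaf on the right. -/
noncomputable def eraseLeaf (m : ℕ) : PTree → PTree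
  | leaf x => leaf x
  | node l r => if r = leaf m then l else node (eraseLeaf m l) (eraseLeaf m r)

section insertions

variable {m : ℕ} {t u : PTree}

theorem mem_insertions_node {l r : PTree} :
    u ∈ insertions m (node l r) ↔ u = node (node l r) (leaf m) ∨
      (∃ l' ∈ insertions m l, u = node l' r) ∨ ∃ r' ∈ insertions m r, u = node l r' := by
  simp only [insertions, List.mem_cons, List.mem_append, List.mem_map, eq_comm (a := u)]

theorem leafSet_of_mem_insertions (hu : u ∈ insertions m t) :
    leafSet u = insert m (leafSet t) := by
  induction t generalizing u with
  | leaf x =>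
    simp only [insertions, List.mem_singleton] at hu
    subst hu
    simp [leafSet, Finset.union_comm]
  | node l r ihl ihr =>
    rcases mem_insertions_node.1 hu with rfl | ⟨l', hl', rfl⟩ | ⟨r', hr', rfl⟩
    · simp [leafSet, Finset.union_comm]
    · simp [leafSet, ihl hl', Finset.insert_union]
    · simp [leafSet, ihr hr', Finset.union_insert]

theorem ne_leaf_of_mem_insertions (hu : u ∈ insertions m t) (x : ℕ) : u ≠ leaf x := by
  cases t with
  | leaf y =>
    simp only [insertions, List.mem_singleton] at hu
    simp [hu]
  | node l r =>
    rcases mem_insertions_node.1 hu with rfl | ⟨l', -, rfl⟩ | ⟨r', -, rfl⟩ <;> simp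

theorem isPhylo_iff_of_mem_insertions (hu : u ∈ insertions m t) :
    isPhylo u ↔ isPhylo t ∧ m ∉ leafSet t := by
  induction t generalizing u with
  | leaf x =>
    simp only [insertions, List.mem_singleton] at hu
    subst hu
    simp [isPhylo, leafSet, eq_comm]
  | node l r ihl ihr =>
    rcases mem_insertions_node.1 hu with rfl | ⟨l', hl', rfl⟩ | ⟨r', hr', rfl⟩
    · simp [isPhylo, leafSet]
    · simp only [isPhylo, ihl hl', leafSet_of_mem_insertions hl', Finset.disjoint_insert_left,
        leafSet, Finset.mem_union]
      tauto
    · simp only [isPhylo, ihr hr', leafSet_of_mem_insertions hr', Finset.disjoint_insert_right,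
        leafSet, Finset.mem_union]
      tauto

theorem canonical_iff_of_mem_insertions (hu : u ∈ insertions m t)
    (hm : ∀ x ∈ leafSet t, x < m) : canonical u ↔ canonical t := by
  induction t generalizing u with
  | leaf x =>
    simp only [insertions, List.mem_singleton] at hu
    subst hu
    simpa [canonical, leafSet] using hm
  | node l r ihl ihr =>
    have hml : ∀ x ∈ leafSet l, x < m := fun x hx => hm x (Finset.mem_union_left _ hx)
    have hmr : ∀ x ∈ leafSet r, x < m := fun x hx => hm x (Finset.mem_union_right _ hx)
    rcases mem_insertions_node.1 hu with rfl | ⟨l', hl', rfl⟩ | ⟨r', hr', rfl⟩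
    · exact ⟨fun h => h.1, fun h => ⟨h, trivial,
        by simpa [leafSet] using Finset.min_lt_coe_of_forall_lt (leafSet_nonempty _) hm⟩⟩
    · simp only [canonical, ihl hl' hml, leafSet_of_mem_insertions hl',
        Finset.min_insert_of_forall_lt (leafSet_nonempty l) hml]
    · simp only [canonical, ihr hr' hmr, leafSet_of_mem_insertions hr',
        Finset.min_insert_of_forall_lt (leafSet_nonempty r) hmr]

theorem exists_mem_insertions (hc : canonical u) (hmu : m ∈ leafSet u)
    (hmax : ∀ x ∈ leafSet u, x ≤ m) (hu : u ≠ leaf m) : ∃ t, u ∈ insertions m t := by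
  induction u with
  | leaf x =>
    simp only [leafSet, Finset.mem_singleton] at hmu
    exact absurd (hmu ▸ rfl) hu
  | node l r ihl ihr =>
    obtain ⟨hcl, hcr, hlr⟩ := hc
    by_cases hr : r = leaf m
    · subst hr
      exact ⟨l, by cases l <;> simp [insertions]⟩
    rcases Finset.mem_union.1 hmu with hml | hmr
    · have hl : l ≠ leaf m := by
        rintro rfl
        obtain ⟨y, hy⟩ := leafSet_nonempty r
        have := hlr.trans_le (Finset.min_le hy)
        simp only [leafSet, Finset.min_singleton, WithTop.coe_lt_coe] at this
        exact (hmax y (Finset.mem_union_right _ hy)).not_gt this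
      obtain ⟨l', hl'⟩ := ihl hcl hml (fun x hx => hmax x (Finset.mem_union_left _ hx)) hl
      exact ⟨node l' r, mem_insertions_node.2 (Or.inr (Or.inl ⟨l, hl', rfl⟩))⟩
    · obtain ⟨r', hr'⟩ := ihr hcr hmr (fun x hx => hmax x (Finset.mem_union_right _ hx)) hr
      exact ⟨node l r', mem_insertions_node.2 (Or.inr (Or.inr ⟨r, hr', rfl⟩))⟩

theorem eraseLeaf_of_not_mem (hm : m ∉ leafSet t) : eraseLeaf m t = t := by
  induction t with
  | leaf x => rfl
  | node l r ihl ihr =>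
    simp only [leafSet, Finset.mem_union, not_or] at hm
    have hr : r ≠ leaf m := by rintro rfl; simp [leafSet] at hm
    rw [eraseLeaf, if_neg hr, ihl hm.1, ihr hm.2]

theorem eraseLeaf_of_mem_insertions (hu : u ∈ insertions m t) (hm : m ∉ leafSet t) :
    eraseLeaf m u = t := by
  induction t generalizing u with
  | leaf x =>
    simp only [insertions, List.mem_singleton] at hu
    simp [hu, eraseLeaf]
  | node l r ihl ihr =>
    simp only [leafSet, Finset.mem_union, not_or] at hm
    rcases mem_insertions_node.1 hu with rfl | ⟨l', hl', rfl⟩ | ⟨r', hr', rfl⟩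
    · simp [eraseLeaf]
    · have hr : r ≠ leaf m := by rintro rfl; simp [leafSet] at hm
      rw [eraseLeaf, if_neg hr, ihl hl' hm.1, eraseLeaf_of_not_mem hm.2]
    · rw [eraseLeaf, if_neg (ne_leaf_of_mem_insertions hr' m), ihr hr' hm.2,
        eraseLeaf_of_not_mem hm.1]

theorem nodup_insertions (hm : m ∉ leafSet t) : (insertions m t).Nodup := by
  induction t with
  | leaf x => simp [insertions]
  | node l r ihl ihr =>
    simp only [leafSet, Finset.mem_union, not_or] at hm
    rw [insertions, List.nodup_cons, List.nodup_append]
    refine ⟨?_, (ihl hm.1).map fun _ _ h => (node.inj h).1,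
      (ihr hm.2).map fun _ _ h => (node.inj h).2, ?_⟩
    · simp only [List.mem_append, List.mem_map, node.injEq, not_or, not_exists, not_and]
      refine ⟨fun l' _ _ hr => ?_, fun r' hr' _ => ne_leaf_of_mem_insertions hr' m⟩
      exact hm.2 (by simp [hr, leafSet])
    · simp only [List.mem_map]
      rintro _ ⟨l', hl', rfl⟩ _ ⟨r', -, rfl⟩ h
      apply hm.1
      rw [← (node.inj h).1, leafSet_of_mem_insertions hl']
      exact Finset.mem_insert_self m _

theorem length_insertions (m : ℕ) (t : PTree) :
    (insertions m t).length = 2 * numLeaves t - 1 := by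
  induction t with
  | leaf x => rfl
  | node l r ihl ihr =>
    have := numLeaves_pos l
    have := numLeaves_pos r
    simp only [insertions, List.length_cons, List.length_append, List.length_map, ihl, ihr,
      numLeaves]
    omega

end insertions

section counting

open scoped Nat

variable {S : Finset ℕ} {m : ℕ}

theorem isTreeOn_singleton_iff {a : ℕ} {t : PTree} : isTreeOn {a} t ↔ t = leaf a := by
  refine ⟨fun ⟨hp, _, hls⟩ => ?_, by rintro rfl; exact ⟨trivial, trivial, rfl⟩⟩
  cases t with
  | leaf x => simpa [leafSet] using hls
  | node l r =>
    have := numLeaves_eq_card hp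
    rw [hls, Finset.card_singleton, numLeaves] at this
    have := numLeaves_pos l
    have := numLeaves_pos r
    omega

theorem card_treesOn_singleton (a : ℕ) : Nat.card (TreesOn {a}) = 1 :=
  Nat.card_eq_one_iff_exists.2
    ⟨⟨leaf a, isTreeOn_singleton_iff.2 rfl⟩,
      fun t => Subtype.ext (isTreeOn_singleton_iff.1 t.2)⟩

theorem isTreeOn_insert_iff (hS : S.Nonempty) (hm : ∀ x ∈ S, x < m) {u : PTree} :
    isTreeOn (insert m S) u ↔ ∃ t, isTreeOn S t ∧ u ∈ insertions m t := by
  have hmS : m ∉ S := fun h => (hm m h).false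
  constructor
  · rintro ⟨hp, hc, hls⟩
    have hmax : ∀ x ∈ leafSet u, x ≤ m := by
      intro x hx
      rw [hls, Finset.mem_insert] at hx
      rcases hx with rfl | hx
      exacts [le_rfl, (hm x hx).le]
    have hu : u ≠ leaf m := by
      rintro rfl
      obtain ⟨x, hx⟩ := hS
      have : x ∈ leafSet (leaf m) := hls ▸ Finset.mem_insert_of_mem hx
      rw [leafSet, Finset.mem_singleton] at this
      exact hmS (this ▸ hx)
    obtain ⟨t, ht⟩ := exists_mem_insertions hc (by simp [hls]) hmax hu
    obtain ⟨hpt, hmt⟩ := (isPhylo_iff_of_mem_insertions ht).1 hp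
    have hlt : leafSet t = S := by
      rw [← Finset.erase_insert hmt, ← leafSet_of_mem_insertions ht, hls,
        Finset.erase_insert hmS]
    exact ⟨t, ⟨hpt, (canonical_iff_of_mem_insertions ht (hlt ▸ hm)).1 hc, hlt⟩, ht⟩
  · rintro ⟨t, ⟨hp, hc, rfl⟩, hu⟩
    exact ⟨(isPhylo_iff_of_mem_insertions hu).2 ⟨hp, hmS⟩,
      (canonical_iff_of_mem_insertions hu hm).2 hc, leafSet_of_mem_insertions hu⟩

theorem isTreeOn_eraseLeaf (hS : S.Nonempty) (hm : ∀ x ∈ S, x < m) {u : PTree}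
    (hu : isTreeOn (insert m S) u) :
    isTreeOn S (eraseLeaf m u) ∧ u ∈ insertions m (eraseLeaf m u) := by
  obtain ⟨t, ht, hut⟩ := (isTreeOn_insert_iff hS hm).1 hu
  rw [eraseLeaf_of_mem_insertions hut fun h => (hm m (ht.2.2 ▸ h)).false]
  exact ⟨ht, hut⟩

noncomputable def treesOnInsertEquiv (hS : S.Nonempty) (hm : ∀ x ∈ S, x < m) :
    TreesOn (insert m S) ≃ Σ t : TreesOn S, {u // u ∈ insertions m t} where
  toFun u := ⟨⟨eraseLeaf m u, (isTreeOn_eraseLeaf hS hm u.2).1⟩,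
    ⟨u, (isTreeOn_eraseLeaf hS hm u.2).2⟩⟩
  invFun p := ⟨p.2, (isTreeOn_insert_iff hS hm).2 ⟨p.1, p.1.2, p.2.2⟩⟩
  left_inv _ := rfl
  right_inv := fun ⟨t, u⟩ => Sigma.subtype_ext
    (Subtype.ext (eraseLeaf_of_mem_insertions u.2 fun h => (hm m (t.2.2.2 ▸ h)).false)) rfl

theorem card_treesOn_insert (hS : S.Nonempty) (hm : ∀ x ∈ S, x < m) [Finite (TreesOn S)] :
    Nat.card (TreesOn (insert m S)) = (2 * S.card - 1) * Nat.card (TreesOn S) := by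
  classical
  have := Fintype.ofFinite (TreesOn S)
  have hfiber (t : TreesOn S) : Nat.card {u // u ∈ insertions m t} = 2 * S.card - 1 := by
    obtain ⟨t, hp, -, rfl⟩ := t
    have hnodup := nodup_insertions (m := m) fun h => (hm m h).false
    rw [Nat.card_congr (List.Nodup.getEquiv (insertions m t) hnodup).symm,
      Nat.card_fin, length_insertions, numLeaves_eq_card hp]
  rw [Nat.card_congr (treesOnInsertEquiv hS hm), Nat.card_sigma,
    Finset.sum_congr rfl fun t _ => hfiber t, Finset.sum_const, Finset.card_univ, smul_eq_mul,
    Nat.card_eq_fintype_card, mul_comm]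

theorem card_treesOn (S : Finset ℕ) (hS : S.Nonempty) :
    Nat.card (TreesOn S) = (2 * S.card - 3)‼ := by
  induction S using Finset.induction_on_max with
  | empty => exact absurd hS Finset.not_nonempty_empty
  | insert m S hm ih =>
    rcases S.eq_empty_or_nonempty with rfl | hS'
    · simp [card_treesOn_singleton]
    have hcard := ih hS'
    have : Finite (TreesOn S) :=
      Nat.finite_of_card_ne_zero (hcard ▸ (Nat.doubleFactorial_pos _).ne')
    have hc := hS'.card_pos
    rw [card_treesOn_insert hS' hm, hcard,
      Finset.card_insert_of_notMem fun h => (hm m h).false,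
      show 2 * (S.card + 1) - 3 = 2 * S.card - 2 + 1 by omega, Nat.doubleFactorial_add_one,
      show 2 * S.card - 2 + 1 = 2 * S.card - 1 by omega,
      show 2 * S.card - 2 - 1 = 2 * S.card - 3 by omega]

end counting

end PTree

open PTree in
/-- For every n ≥ 2, the number of isomorphism classes of binary rooted phylogenetic
trees with leaves bijectively labeled by {1,…,n} is the double factorial (2n−3)!!. -/
theorem numPhyloTrees (n : ℕ) (hn : 2 ≤ n) :
    Nat.card {t : PTree // isTreeOn (Finset.Icc 1 n) t} = Nat.doubleFactorial (2 * n - 3) := by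
  rw [card_treesOn _ (Finset.nonempty_Icc.2 (by omega)), Nat.card_Icc, Nat.add_sub_cancel]
end

section
/- If T_k and T_{n-k} are binary phylogenetic trees with k and n-k leaves respectively, then the Yule probability of their join satisfies P_Y(T_k ^ T_{n-k}) = (2 / ((n-1)·binomial(n,k))) · P_Y(T_k) · P_Y(T_{n-k}). -/
open PTree in
/-- Under the Yule model, the probability of the join of two phylogenetic trees with
k and n−k leaves is 2/((n−1)·C(n,k)) times the product of their probabilities. -/
theorem yule_join (n k : ℕ) (T₁ T₂ : PTree)
    (h₁ : isPhylo T₁) (h₂ : isPhylo T₂)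
    (hdisj : Disjoint (leafSet T₁) (leafSet T₂))
    (hk : 1 ≤ k) (hkn : k ≤ n - 1)
    (hn₁ : numLeaves T₁ = k) (hn₂ : numLeaves T₂ = n - k) :
    yule (PTree.node T₁ T₂) =
      2 / (((n : ℚ) - 1) * (n.choose k : ℚ)) * yule T₁ * yule T₂ := by
  have hn2 : 2 ≤ n := by omega
  have hkm : k + (n - k) = n := by omega
  simp only [yule, numLeaves, yuleProd, hn₁, hn₂, hkm]
  have hfact : (Nat.choose n k : ℚ) * (Nat.factorial k : ℚ) * (Nat.factorial (n - k) : ℚ)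
      = (Nat.factorial n : ℚ) := by
    rw [← Nat.cast_mul, ← Nat.cast_mul, Nat.choose_mul_factorial_mul_factorial (by omega)]
  have hpow : (2 : ℚ) ^ (n - 1) = 2 * 2 ^ (k - 1) * 2 ^ (n - k - 1) := by
    rw [mul_assoc, ← pow_add, ← pow_succ']
    congr 1
    omega
  have hne1 : ((n : ℚ) - 1) ≠ 0 := by
    have : (2 : ℚ) ≤ (n : ℚ) := by exact_mod_cast hn2
    linarith
  have hne2 : (Nat.factorial n : ℚ) ≠ 0 := by
    exact_mod_cast Nat.factorial_ne_zero n
  have hne3 : (Nat.factorial k : ℚ) ≠ 0 := by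
    exact_mod_cast Nat.factorial_ne_zero k
  have hne4 : (Nat.factorial (n - k) : ℚ) ≠ 0 := by
    exact_mod_cast Nat.factorial_ne_zero (n - k)
  have hne5 : (Nat.choose n k : ℚ) ≠ 0 := by
    have := Nat.choose_pos (show k ≤ n by omega); positivity
  field_simp
  rw [hpow, ← hfact]
  ring
end

section
/- Let (E_n) be a sequence of rationals with E_1 = 0 satisfying, for all n ≥ 2, E_n = (2/(n−1)) ∑_{k=1}^{n−1} E_k + n(n−2)/(2(n−1)) if n is even, and E_n = (2/(n−1)) ∑_{k=1}^{n−1} E_k + (n−1)/2 if n is odd. Then for all n ≥ 3, E_n = (n/(n−1)) E_{n−1} + (n−2)/(n−1) if n is even, and E_n = (n/(n−1)) E_{n−1} + 1 if n is odd. -/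
/-- A full-history recurrence for a sequence of rationals reduces to a first-order
recurrence. -/
theorem recurrence_order_one (E : ℕ → ℚ) (hE1 : E 1 = 0)
    (hrec : ∀ n, 2 ≤ n →
      E n = 2 / ((n : ℚ) - 1) * ∑ k ∈ Finset.Icc 1 (n - 1), E k +
        (if Even n then (n : ℚ) * ((n : ℚ) - 2) / (2 * ((n : ℚ) - 1))
         else ((n : ℚ) - 1) / 2)) :
    ∀ n, 3 ≤ n →
      E n = (n : ℚ) / ((n : ℚ) - 1) * E (n - 1) +
        (if Even n then ((n : ℚ) - 2) / ((n : ℚ) - 1) else 1) := by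
  intro n hn
  obtain ⟨k, hk1, rfl⟩ : ∃ k, 1 ≤ k ∧ n = k + 2 := ⟨n - 2, by omega, by omega⟩
  have h1 := hrec (k + 2) (by omega)
  have h2 := hrec (k + 1) (by omega)
  have hsum : ∑ j ∈ Finset.Icc 1 (k + 1), E j
      = (∑ j ∈ Finset.Icc 1 k, E j) + E (k + 1) :=
    Finset.sum_Icc_succ_top (by omega) E
  simp only [show k + 2 - 1 = k + 1 from rfl, show k + 1 - 1 = k from rfl,
    hsum] at h1 h2 ⊢
  have hk : (k : ℚ) ≠ 0 := by positivity
  have hk1' : (k : ℚ) + 1 ≠ 0 := by positivity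
  push_cast at h1 h2 ⊢
  set S := ∑ j ∈ Finset.Icc 1 k, E j with hS
  rcases Nat.even_or_odd k with he | ho
  · rw [Nat.even_iff] at he
    rw [if_pos (Nat.even_iff.mpr (by omega))] at h1 ⊢
    rw [if_neg (fun h => by have := Nat.even_iff.mp h; omega)] at h2
    rw [show (k : ℚ) + 1 - 1 = (k : ℚ) from by ring] at h2
    have h2' : (k : ℚ) * E (k + 1) = 2 * S + (k:ℚ) ^ 2 / 2 := by
      rw [h2]; field_simp
    have hS2 : S = (k : ℚ) / 2 * E (k + 1) - (k : ℚ) ^ 2 / 4 := by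
      linarith
    rw [hS2] at h1
    rw [h1, show (k : ℚ) + 2 - 1 = (k : ℚ) + 1 from by ring,
      show (k : ℚ) + 2 - 2 = (k : ℚ) from by ring]
    field_simp
    ring
  · rw [Nat.odd_iff] at ho
    rw [if_neg (fun h => by have := Nat.even_iff.mp h; omega)] at h1 ⊢
    rw [if_pos (Nat.even_iff.mpr (by omega))] at h2
    rw [show (k : ℚ) + 1 - 1 = (k : ℚ) from by ring] at h2
    have h2' : (k : ℚ) * E (k + 1) = 2 * S + ((k:ℚ)+1) * ((k:ℚ)-1) / 2 := by
      rw [h2]; field_simp; ring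
    have hS2 : S = (k : ℚ) / 2 * E (k + 1) - ((k:ℚ) + 1) * ((k:ℚ) - 1) / 4 := by
      linarith
    rw [hS2] at h1
    rw [h1, show (k : ℚ) + 2 - 1 = (k : ℚ) + 1 from by ring]
    field_simp
    ring
end

section
/- Let (E_n) be the sequence of rationals with E_1 = E_2 = 0 satisfying, for all n ≥ 3, E_n = (n/(n−1)) E_{n−1} + (n−2)/(n−1) if n is even and E_n = (n/(n−1)) E_{n−1} + 1 if n is odd. Then for all n ≥ 2, E_n = n · ∑_{j=2}^{⌊n/2⌋} 1/j + δ_odd(n), where δ_odd(n) = 1 if n is odd and 0 if n is even. -/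
open Finset

theorem eq_of_forall_eq_step {α : Type*} (f : ℕ → α → α) {E F : ℕ → α} {k : ℕ}
    (hE : ∀ n, k < n → E n = f n (E (n - 1))) (hF : ∀ n, k < n → F n = f n (F (n - 1)))
    (hk : E k = F k) : ∀ n, k ≤ n → E n = F n := by
  intro n hn
  induction n, hn using Nat.le_induction with
  | base => exact hk
  | succ n hn ih => rw [hE _ (by omega), hF _ (by omega), Nat.add_sub_cancel, ih]

def collessClosedForm (n : ℕ) : ℚ :=
  n * ∑ j ∈ Icc 2 (n / 2), (1 : ℚ) / j + if Odd n then 1 else 0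

theorem collessClosedForm_two_mul (m : ℕ) :
    collessClosedForm (2 * m) = 2 * m * ∑ j ∈ Icc 2 m, (1 : ℚ) / j := by
  simp [collessClosedForm]

theorem collessClosedForm_two_mul_add_one (m : ℕ) :
    collessClosedForm (2 * m + 1) = (2 * m + 1) * ∑ j ∈ Icc 2 m, (1 : ℚ) / j + 1 := by
  have hdiv : (2 * m + 1) / 2 = m := by omega
  simp [collessClosedForm, hdiv]

/-- Going from `2m+1` to `2m+2` the sum gains `1/(m+1)`, matching the increment
`(2m+2)/(2m+1) + 2m/(2m+1) = 2 = (2m+2)/(m+1)`; going from `2m` to `2m+1` the sum is unchanged. -/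
theorem collessClosedForm_eq_step {n : ℕ} (hn : 3 ≤ n) :
    collessClosedForm n = (n : ℚ) / ((n : ℚ) - 1) * collessClosedForm (n - 1) +
      (if Even n then ((n : ℚ) - 2) / ((n : ℚ) - 1) else 1) := by
  obtain ⟨m, rfl | rfl⟩ := Nat.even_or_odd' n
  · obtain ⟨m, rfl⟩ : ∃ k, m = k + 1 := ⟨m - 1, by omega⟩
    have hpred : 2 * (m + 1) - 1 = 2 * m + 1 := by omega
    rw [if_pos (even_two_mul _), hpred, collessClosedForm_two_mul,
      collessClosedForm_two_mul_add_one, sum_Icc_succ_top (by omega)]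
    push_cast
    have hm : 2 * ((m : ℚ) + 1) - 1 ≠ 0 := by ring_nf; positivity
    have hm' : (m : ℚ) + 1 ≠ 0 := by positivity
    field_simp
    ring
  · have hm : (m : ℚ) ≠ 0 := by norm_cast; omega
    rw [if_neg (Nat.not_even_iff_odd.mpr (odd_two_mul_add_one m)), Nat.add_sub_cancel,
      collessClosedForm_two_mul, collessClosedForm_two_mul_add_one]
    push_cast
    field_simp
    ring

theorem recurrence_solution_general (E : ℕ → ℚ) (hE2 : E 2 = 0)
    (hrec : ∀ n, 3 ≤ n →
      E n = (n : ℚ) / ((n : ℚ) - 1) * E (n - 1) +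
        (if Even n then ((n : ℚ) - 2) / ((n : ℚ) - 1) else 1)) :
    ∀ n, 2 ≤ n →
      E n = (n : ℚ) * ∑ j ∈ Finset.Icc 2 (n / 2), (1 : ℚ) / j +
        (if Odd n then 1 else 0) :=
  eq_of_forall_eq_step
    (fun n x => (n : ℚ) / ((n : ℚ) - 1) * x + if Even n then ((n : ℚ) - 2) / ((n : ℚ) - 1) else 1)
    (F := collessClosedForm) hrec (fun _ hn => collessClosedForm_eq_step hn)
    (by simp [hE2, collessClosedForm])

/-- The solution of the first-order recurrence for the expected Colless index:
E_n = n·∑_{j=2}^{⌊n/2⌋} 1/j + δ_odd(n). -/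
theorem recurrence_solution (E : ℕ → ℚ) (hE1 : E 1 = 0) (hE2 : E 2 = 0)
    (hrec : ∀ n, 3 ≤ n →
      E n = (n : ℚ) / ((n : ℚ) - 1) * E (n - 1) +
        (if Even n then ((n : ℚ) - 2) / ((n : ℚ) - 1) else 1)) :
    ∀ n, 2 ≤ n →
      E n = (n : ℚ) * ∑ j ∈ Finset.Icc 2 (n / 2), (1 : ℚ) / j +
        (if Odd n then 1 else 0) :=
  recurrence_solution_general E hE2 hrec
end

section
/- For every n ≥ 2, (1/(2n−3)!!) ∑_{k=1}^{n−1} k · (2n−k−3)!·k/((n−k−1)!·2^(n−k−1)) = (1/(2n−3)) ∑_{k≥0} (2)_k(2)_k(2−n)_k · 2^k / ((1)_k(4−2n)_k · k!), where the right-hand sum is finite since (2−n)_k = 0 for k ≥ n−1. -/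
/-!
Write n = m + 2. Since 2 - n = -m and 4 - 2n = -2m, the Pochhammer symbols at these points are
signed descending factorials, so the k-th term of ₃F₂(2, 2, -m; 1, -2m; 2) is
(k+1)² 2^k m^(k)/(2m)^(k) (falling powers), which vanishes for k > m. After the shift k ↦ k + 1
on the left, the two sums agree term by term, because (2m+1)! = (2m+1)‼ · 2^m · m!.
-/

open Nat Finset

theorem ascPochhammer_eval_neg_natCast {R : Type*} [Ring R] (m k : ℕ) :
    (ascPochhammer R k).eval (-(m : R)) = (-1) ^ k * m.descFactorial k := by
  rw [ascPochhammer_eval_neg_eq_descPochhammer, descPochhammer_eval_eq_descFactorial]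

theorem ascPochhammer_eval_two (R : Type*) [Semiring R] (k : ℕ) :
    (ascPochhammer R k).eval 2 = ((k + 1)! : R) := by
  simpa [one_add_one_eq_two, add_comm] using factorial_mul_ascPochhammer R 1 k

theorem Nat.doubleFactorial_mul_two_pow_mul_factorial (m : ℕ) :
    (2 * m + 1)‼ * (2 ^ m * m !) = (2 * m + 1)! := by
  rw [← doubleFactorial_two_mul, ← factorial_eq_mul_doubleFactorial]

theorem hypergeometric_summand_eq (m j : ℕ) :
    (ascPochhammer ℚ j).eval 2 * (ascPochhammer ℚ j).eval 2 *
        (ascPochhammer ℚ j).eval (-(m : ℚ)) * 2 ^ j /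
      ((ascPochhammer ℚ j).eval 1 * (ascPochhammer ℚ j).eval (-((2 * m : ℕ) : ℚ)) * (j ! : ℚ)) =
    (j + 1) ^ 2 * 2 ^ j * m.descFactorial j / (2 * m).descFactorial j := by
  rw [ascPochhammer_eval_two, ascPochhammer_eval_one, ascPochhammer_eval_neg_natCast,
    ascPochhammer_eval_neg_natCast, factorial_succ]
  have hj : (j ! : ℚ) ≠ 0 := by positivity
  push_cast
  field_simp

theorem sackin_summand_eq {m j : ℕ} (hj : j ≤ m) :
    1 / ((2 * m + 1)‼ : ℚ) * (((1 + j : ℕ) : ℚ) * (((2 * m - j)! : ℚ) * (1 + j : ℕ) /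
      (((m - j)! : ℚ) * 2 ^ (m - j)))) =
    1 / (2 * m + 1 : ℚ) * ((j + 1) ^ 2 * 2 ^ j * m.descFactorial j / (2 * m).descFactorial j) := by
  have hm := factorial_mul_descFactorial hj
  have h2m := factorial_mul_descFactorial (show j ≤ 2 * m by omega)
  have hdf := doubleFactorial_mul_two_pow_mul_factorial m
  rw [factorial_succ, ← h2m, ← hm] at hdf
  have hpow : (2 : ℚ) ^ m = 2 ^ (m - j) * 2 ^ j := by rw [← pow_add, Nat.sub_add_cancel hj]
  have hd : ((2 * m).descFactorial j : ℚ) ≠ 0 := by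
    exact_mod_cast (descFactorial_pos.mpr (by omega)).ne'
  have hdf_ne : ((2 * m + 1)‼ : ℚ) ≠ 0 := by positivity
  field_simp
  rw [← Nat.cast_inj (R := ℚ)] at hdf
  push_cast at hdf ⊢
  rw [hpow] at hdf
  linear_combination -(1 + j) ^ 2 * hdf

/-- (1/(2n−3)!!)·∑_{k=1}^{n−1} k·(2n−k−3)!·k/((n−k−1)!·2^(n−k−1))
  = (1/(2n−3))·∑_{k≥0} (2)_k(2)_k(2−n)_k·2^k/((1)_k(4−2n)_k·k!),
the right-hand series terminating since (2−n)_k = 0 for k ≥ n−1. -/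
theorem sackin_hypergeometric_identity (n : ℕ) (hn : 2 ≤ n) :
    (1 / (Nat.doubleFactorial (2 * n - 3) : ℚ)) *
      ∑ k ∈ Finset.Icc 1 (n - 1),
        (k : ℚ) * ((Nat.factorial (2 * n - k - 3) : ℚ) * k /
          ((Nat.factorial (n - k - 1) : ℚ) * 2 ^ (n - k - 1))) =
    (1 / (2 * (n : ℚ) - 3)) *
      ∑ᶠ k : ℕ,
        (ascPochhammer ℚ k).eval 2 * (ascPochhammer ℚ k).eval 2 *
          (ascPochhammer ℚ k).eval (2 - (n : ℚ)) * 2 ^ k /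
        ((ascPochhammer ℚ k).eval 1 * (ascPochhammer ℚ k).eval (4 - 2 * (n : ℚ)) *
          (Nat.factorial k : ℚ)) := by
  obtain ⟨m, rfl⟩ : ∃ m, n = m + 2 := ⟨n - 2, by omega⟩
  have h2 : (2 : ℚ) - ((m + 2 : ℕ) : ℚ) = -(m : ℚ) := by push_cast; ring
  have h4 : (4 : ℚ) - 2 * ((m + 2 : ℕ) : ℚ) = -((2 * m : ℕ) : ℚ) := by push_cast; ring
  have h3 : 2 * ((m + 2 : ℕ) : ℚ) - 3 = 2 * m + 1 := by push_cast; ring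
  simp only [h2, h4, h3, hypergeometric_summand_eq]
  rw [finsum_eq_sum_of_support_subset _ (s := range (m + 1)) fun j hj => by
    by_contra hjm
    exact hj (by simp [descFactorial_eq_zero_iff_lt.mpr (by simpa using hjm : m < j)])]
  rw [show m + 2 - 1 = m + 1 by omega, ← Ico_add_one_right_eq_Icc, sum_Ico_eq_sum_range,
    show 2 * (m + 2) - 3 = 2 * m + 1 by omega, mul_sum, mul_sum]
  refine sum_congr (by simp) fun j hj => ?_
  have hjm : j ≤ m := by rw [mem_range] at hj; omega
  rw [show 2 * (m + 2) - (1 + j) - 3 = 2 * m - j by omega,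
    show m + 2 - (1 + j) - 1 = m - j by omega, sackin_summand_eq hjm]
end

section
/- For every n ≥ 2, ∑_{k=1}^{n−1} (2n−k−3)!·k/((n−k−1)!·2^(n−k−1)) = (2n−3)!!, i.e., the counts c_{k,n} of trees by the depth of leaf 1 sum to the total number of binary phylogenetic trees with n leaves. -/
lemma aux (m : ℕ) :
    ∑ k ∈ Finset.Icc 1 (m + 1),
        ((Nat.factorial (2 * m + 1 - k) : ℚ) * k /
          ((Nat.factorial (m + 1 - k) : ℚ) * 2 ^ (m + 1 - k))) =
      (Nat.doubleFactorial (2 * m + 1) : ℚ) := by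
  set g : ℕ → ℚ := fun j => if j ≤ m then
      (Nat.factorial (2 * m + 1 - j) : ℚ) / ((Nat.factorial (m - j) : ℚ) * 2 ^ (m - j))
    else 0 with hg
  rw [show Finset.Icc 1 (m+1) = Finset.Ico 1 (m+2) from rfl, Finset.sum_Ico_eq_sum_range]
  have hstep : ∀ i ∈ Finset.range (m + 2 - 1),
      ((Nat.factorial (2 * m + 1 - (1 + i)) : ℚ) * ((1 + i : ℕ) : ℚ) /
        ((Nat.factorial (m + 1 - (1 + i)) : ℚ) * 2 ^ (m + 1 - (1 + i))))
      = g i - g (i + 1) := by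
    intro i hi
    simp only [Finset.mem_range] at hi
    rcases Nat.lt_or_ge i m with h | h
    · -- i < m : write m = i + e + 1
      obtain ⟨e, rfl⟩ : ∃ e, m = i + e + 1 := ⟨m - i - 1, by omega⟩
      have h1 : 2 * (i + e + 1) + 1 - (1 + i) = (i + 2 * e + 2) := by omega
      have h2 : (i + e + 1) + 1 - (1 + i) = e + 1 := by omega
      have h3 : 2 * (i + e + 1) + 1 - i = (i + 2 * e + 2) + 1 := by omega
      have h4 : (i + e + 1) - i = e + 1 := by omega
      have h5 : 2 * (i + e + 1) + 1 - (i + 1) = i + 2 * e + 2 := by omega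
      have h6 : (i + e + 1) - (i + 1) = e := by omega
      simp only [hg, if_pos (by omega : i ≤ i + e + 1),
        if_pos (by omega : i + 1 ≤ i + e + 1), h1, h2, h3, h4, h5, h6]
      rw [Nat.factorial_succ ((i + 2 * e + 2)), Nat.factorial_succ e]
      have he : (Nat.factorial e : ℚ) ≠ 0 := by positivity
      have hf : (Nat.factorial (i + 2 * e + 2) : ℚ) ≠ 0 := by positivity
      push_cast
      field_simp
      ring
    · -- i = m
      obtain rfl : m = i := by omega
      simp only [hg, if_pos (le_refl m), if_neg (by omega : ¬ m + 1 ≤ m)]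
      have h1 : 2 * m + 1 - (1 + m) = m := by omega
      have h2 : m + 1 - (1 + m) = 0 := by omega
      have h3 : 2 * m + 1 - m = m + 1 := by omega
      rw [h1, h2, h3, Nat.sub_self, Nat.factorial_zero, pow_zero, Nat.factorial_succ]
      push_cast
      ring
  rw [Finset.sum_congr rfl hstep, Finset.sum_range_sub']
  have : g (m + 2 - 1) = 0 := by
    simp [hg]
  rw [this, sub_zero]
  simp only [hg, if_pos (Nat.zero_le m), Nat.sub_zero]
  -- (2m+1)!/(m! * 2^m) = (2m+1)‼
  have key : (Nat.factorial (2 * m + 1) : ℚ) =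
      (Nat.doubleFactorial (2 * m + 1) : ℚ) * (Nat.factorial m * 2 ^ m) := by
    have h := Nat.factorial_eq_mul_doubleFactorial (2 * m)
    rw [Nat.doubleFactorial_two_mul] at h
    exact_mod_cast by rw [h]; ring
  rw [key]
  have : (Nat.factorial m : ℚ) * 2 ^ m ≠ 0 := by positivity
  field_simp

/-- The counts c_{k,n} = (2n−k−3)!·k/((n−k−1)!·2^(n−k−1)) of phylogenetic trees by the
depth of leaf 1 sum to the total number (2n−3)!! of phylogenetic trees with n leaves. -/
theorem sum_ckn_eq_doubleFactorial (n : ℕ) (hn : 2 ≤ n) :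
    ∑ k ∈ Finset.Icc 1 (n - 1),
        ((Nat.factorial (2 * n - k - 3) : ℚ) * k /
          ((Nat.factorial (n - k - 1) : ℚ) * 2 ^ (n - k - 1))) =
      (Nat.doubleFactorial (2 * n - 3) : ℚ) := by
  obtain ⟨m, rfl⟩ : ∃ m, n = m + 2 := ⟨n - 2, by omega⟩
  have h1 : (m + 2) - 1 = m + 1 := by omega
  have h2 : 2 * (m + 2) - 3 = 2 * m + 1 := by omega
  rw [h1, h2, ← aux m]
  refine Finset.sum_congr rfl fun k hk => ?_
  simp only [Finset.mem_Icc] at hk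
  have h3 : 2 * (m + 2) - k - 3 = 2 * m + 1 - k := by omega
  have h4 : (m + 2) - k - 1 = m + 1 - k := by omega
  rw [h3, h4]
end
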